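/- arXiv:2502.04517 — 6 statements merged into one kernel-verified Lean document; each statement's English description precedes it below -/
import Mathlib

section
/- (Main theorem.) Let τ be a nonempty finite type, n : ℕ, and r : List τ → ℝ. Suppose V : List τ → ℝ satisfies the local max constraint and the boundary condition for r. Let y* be a list over τ of length n such that r y* ≥ r y for every list y over τ of length n. Then for every i ≤ n and every list s over τ with length s ≤ n, V (y*.take i) ≥ V s; that is, every prefix of an optimal full sequence is scored at least as high as any other partial sequence. -/
/-- `V` satisfies the local max constraint: for every list `s` over `τ` with
`s.length < n`, `V s` equals the maximum over tokens `t : τ` of `V (s ++ [t])`. -/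
def LocalMaxConstraint {τ : Type*} [Fintype τ] [Nonempty τ] (n : ℕ) (V : List τ → ℝ) : Prop :=
  ∀ s : List τ, s.length < n →
    V s = Finset.univ.sup' Finset.univ_nonempty (fun t : τ => V (s ++ [t]))

/-- `V` satisfies the boundary condition for `r`: `V y = r y` for every
full sequence `y` (list of length `n`). -/
def BoundaryCondition {τ : Type*} (n : ℕ) (r V : List τ → ℝ) : Prop :=
  ∀ y : List τ, y.length = n → V y = r y

/-! Backward induction from the boundary: since `V` at a partial sequence is the maximum of `V`
over its one-token extensions, any upper bound of `r` on full sequences bounds `V` everywhere,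
so `V ≤ r y*`. Conversely `V` can only decrease when a token is appended, so every prefix of
`y*` scores at least `V y* = r y*`. -/

namespace LocalMaxConstraint

variable {τ : Type*} [Fintype τ] [Nonempty τ] {n : ℕ} {V : List τ → ℝ}

theorem le_of_append_singleton (hmax : LocalMaxConstraint n V) {s : List τ}
    (hs : s.length < n) (t : τ) : V (s ++ [t]) ≤ V s := by
  rw [hmax s hs]
  exact Finset.le_sup' (fun t => V (s ++ [t])) (Finset.mem_univ t)

theorem take_antitone (hmax : LocalMaxConstraint n V) (l : List τ) {i j : ℕ}
    (hij : i ≤ j) (hjn : j ≤ n) : V (l.take j) ≤ V (l.take i) := by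
  induction j, hij using Nat.le_induction with
  | base => exact le_rfl
  | succ j _ ih =>
    refine le_trans ?_ (ih (by omega))
    rw [List.take_add_one]
    cases l[j]? with
    | none => simp
    | some t =>
      exact hmax.le_of_append_singleton (by grind [List.length_take]) t

theorem le_of_boundary_le (hmax : LocalMaxConstraint n V) {r : List τ → ℝ}
    (hbd : BoundaryCondition n r V) {c : ℝ} (hc : ∀ y : List τ, y.length = n → r y ≤ c)
    {s : List τ} (hs : s.length ≤ n) : V s ≤ c := by
  suffices h : ∀ k, ∀ s : List τ, s.length + k = n → V s ≤ c from h (n - s.length) s (by omega)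
  intro k
  induction k with
  | zero => exact fun s hs => (hbd s hs).trans_le (hc s hs)
  | succ k ih =>
    intro s hs
    rw [hmax s (by omega)]
    exact Finset.sup'_le _ _ fun t _ => ih (s ++ [t]) (by simp; omega)

end LocalMaxConstraint

/-- Main theorem: if `V` satisfies the local max constraint and the boundary condition
for `r`, and `y*` is an optimal full sequence (its reward is at least that of every
full sequence), then every prefix `y*.take i` (`i ≤ n`) is scored by `V` at least as
high as any other partial sequence `s` with `s.length ≤ n`. -/
theorem prefix_of_optimal_scores_highest {τ : Type*} [Fintype τ] [Nonempty τ]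
    (n : ℕ) (r V : List τ → ℝ)
    (hmax : LocalMaxConstraint n V) (hbd : BoundaryCondition n r V)
    (ystar : List τ) (hlen : ystar.length = n)
    (hopt : ∀ y : List τ, y.length = n → r y ≤ r ystar) :
    ∀ i ≤ n, ∀ s : List τ, s.length ≤ n → V s ≤ V (ystar.take i) := by
  intro i hi s hs
  calc V s ≤ r ystar := hmax.le_of_boundary_le hbd hopt hs
    _ = V (ystar.take n) := by rw [← hlen, List.take_length, hbd ystar hlen]
    _ ≤ V (ystar.take i) := hmax.take_antitone ystar hi le_rfl
end

section
/- Let τ be a nonempty finite type, n : ℕ, and r : List τ → ℝ. Suppose V : List τ → ℝ satisfies the local max constraint and the boundary condition for r. Then for every list s over τ with length s ≤ n, V s = max over all lists y over τ of length n of r y if and only if there exists a list y over τ of length n having s as a prefix with r y = max over all lists y' over τ of length n of r y'; that is, a partial sequence attains the maximal value exactly when it extends to an optimal full sequence. -/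
/-- If `V` satisfies the local max constraint and the boundary condition for `r`, then
a partial sequence `s` (`s.length ≤ n`) attains the maximal value (the maximal reward
over all full sequences of length `n`) if and only if `s` extends to an optimal full
sequence, i.e. there is a list `y` of length `n` having `s` as a prefix whose reward is
the maximal reward over all full sequences. -/
theorem value_eq_max_iff_extends_to_optimal {τ : Type*} [Fintype τ] [Nonempty τ]
    (n : ℕ) (r V : List τ → ℝ)
    (hmax : LocalMaxConstraint n V) (hbd : BoundaryCondition n r V) :
    ∀ s : List τ, s.length ≤ n →
      (V s = Finset.univ.sup' Finset.univ_nonempty (fun y : Fin n → τ => r (List.ofFn y)) ↔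
        ∃ y : List τ, y.length = n ∧ s <+: y ∧
          r y = Finset.univ.sup' Finset.univ_nonempty
            (fun y' : Fin n → τ => r (List.ofFn y'))) := by
  set M := Finset.univ.sup' Finset.univ_nonempty (fun y : Fin n → τ => r (List.ofFn y)) with hM
  -- every full sequence has reward ≤ M
  have hle : ∀ y : List τ, y.length = n → r y ≤ M := by
    intro y hy
    subst hy
    have := Finset.le_sup' (fun f : Fin y.length → τ => r (List.ofFn f))
      (Finset.mem_univ y.get)
    simp only [List.ofFn_get] at this
    exact this
  -- reward of any full extension is ≤ V s
  have hA : ∀ t : List τ, ∀ s : List τ, (s ++ t).length = n → r (s ++ t) ≤ V s := by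
    intro t
    induction t with
    | nil => intro s hs; simp only [List.append_nil] at *; exact (hbd s hs).ge
    | cons a t' ih =>
      intro s hs
      have hlt : s.length < n := by
        simp [List.length_append] at hs; omega
      have h1 : r (s ++ a :: t') ≤ V (s ++ [a]) := by
        have := ih (s ++ [a]) (by simpa using hs)
        simpa using this
      calc r (s ++ a :: t') ≤ V (s ++ [a]) := h1
        _ ≤ Finset.univ.sup' Finset.univ_nonempty (fun t : τ => V (s ++ [t])) :=
            Finset.le_sup' (fun t : τ => V (s ++ [t])) (Finset.mem_univ a)
        _ = V s := (hmax s hlt).symm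
  -- there exists a full extension attaining V s
  have hB : ∀ k : ℕ, ∀ s : List τ, s.length ≤ n → n - s.length = k →
      ∃ y : List τ, y.length = n ∧ s <+: y ∧ V s = r y := by
    intro k
    induction k with
    | zero =>
      intro s hs hk
      have : s.length = n := by omega
      exact ⟨s, this, List.prefix_refl s, hbd s this⟩
    | succ k ih =>
      intro s hs hk
      have hlt : s.length < n := by omega
      obtain ⟨t, -, ht⟩ := Finset.exists_mem_eq_sup' Finset.univ_nonempty
        (fun t : τ => V (s ++ [t]))
      obtain ⟨y, hy, hpre, hV⟩ := ih (s ++ [t]) (by simp; omega) (by simp; omega)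
      exact ⟨y, hy, ((s.prefix_append [t]).trans hpre), by rw [hmax s hlt, ht, hV]⟩
  intro s hs
  constructor
  · intro h
    obtain ⟨y, hy, hpre, hV⟩ := hB (n - s.length) s hs rfl
    exact ⟨y, hy, hpre, by rw [← hV, ← h]⟩
  · rintro ⟨y, hy, ⟨t, rfl⟩, hr⟩
    obtain ⟨y', hy', -, hV'⟩ := hB (n - s.length) s hs rfl
    have h1 : V s ≤ M := hV' ▸ hle y' hy'
    have h2 : M ≤ V s := hr ▸ hA t s hy
    linarith
end

section
/- Let τ be a nonempty finite type, n : ℕ, and r : List τ → ℝ. Define V : List τ → ℝ by V s = max over all lists e over τ of length n − length s of r (s ++ e) whenever length s ≤ n (and arbitrarily otherwise). Then V satisfies the local max constraint (for every list s with length s < n, V s = max over t : τ of V (s ++ [t])) and the boundary condition for r (V y = r y for every list y of length n); in particular, a value function satisfying both conditions exists for every reward r. -/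
/-- If `V` is defined on partial sequences `s` (`s.length ≤ n`) as the maximum of
`r (s ++ e)` over all lists `e` of length `n - s.length` (and arbitrarily on other
lists), then `V` satisfies the local max constraint and the boundary condition for `r`.
In particular, a value function satisfying both conditions exists for every reward `r`. -/
theorem defined_max_satisfies_constraints {τ : Type*} [Fintype τ] [Nonempty τ]
    (n : ℕ) (r V : List τ → ℝ)
    (hdef : ∀ s : List τ, s.length ≤ n →
      V s = Finset.univ.sup' Finset.univ_nonempty
        (fun e : Fin (n - s.length) → τ => r (s ++ List.ofFn e))) :
    (LocalMaxConstraint n V ∧ BoundaryCondition n r V) ∧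
    ∃ W : List τ → ℝ, LocalMaxConstraint n W ∧ BoundaryCondition n r W := by
  have key : LocalMaxConstraint n V ∧ BoundaryCondition n r V := by
    constructor
    · intro s hs
      have hlen : ∀ t : τ, (s ++ [t]).length ≤ n := by
        intro t; simpa using Nat.succ_le_of_lt hs
      have hr : ∀ t : τ, V (s ++ [t]) = Finset.univ.sup' Finset.univ_nonempty
          (fun e : Fin (n - (s.length + 1)) → τ => r ((s ++ [t]) ++ List.ofFn e)) := by
        intro t
        rw [hdef _ (hlen t), show (s ++ [t]).length = s.length + 1 by simp]
      have hm : n - s.length = (n - (s.length + 1)) + 1 := by omega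
      rw [hdef s hs.le, hm]
      simp only [hr]
      apply le_antisymm
      · apply Finset.sup'_le
        intro e _
        have heq : s ++ List.ofFn e
            = (s ++ [e 0]) ++ List.ofFn (fun i : Fin (n - (s.length + 1)) => e i.succ) := by
          rw [List.ofFn_succ]; simp
        rw [heq]
        refine le_trans ?_ (Finset.le_sup'
          (fun t : τ => Finset.univ.sup' Finset.univ_nonempty
            (fun e' : Fin (n - (s.length + 1)) → τ => r ((s ++ [t]) ++ List.ofFn e')))
          (Finset.mem_univ (e 0)))
        exact Finset.le_sup'
          (fun e' : Fin (n - (s.length + 1)) → τ => r ((s ++ [e 0]) ++ List.ofFn e'))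
          (Finset.mem_univ (fun i : Fin (n - (s.length + 1)) => e i.succ))
      · apply Finset.sup'_le
        intro t _
        apply Finset.sup'_le
        intro e _
        have heq : (s ++ [t]) ++ List.ofFn e = s ++ List.ofFn (Fin.cons t e : Fin (n - (s.length + 1) + 1) → τ) := by
          rw [List.ofFn_succ]; simp
        rw [heq]
        exact Finset.le_sup'
          (fun e' : Fin (n - (s.length + 1) + 1) → τ => r (s ++ List.ofFn e'))
          (Finset.mem_univ (Fin.cons t e : Fin (n - (s.length + 1) + 1) → τ))
    · intro y hy
      have h0 : n - y.length = 0 := by omega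
      rw [hdef y hy.le, h0]
      simp
  exact ⟨key, V, key⟩
end

section
/- (Theorem 1: PARGS may score a prefix of the optimal sequence below another prefix.) There exist a nonempty finite type τ, n : ℕ, an index i with 0 < i < n, four pairwise distinct lists y*, y', y'', y''' over τ of length n with y*.take (i−1) = y'.take (i−1), y*.take i ≠ y'.take i, and y*.take i = y''.take i = y'''.take i, and a preference dataset D consisting of the three pairs (y*, y'), (y', y''), (y', y''') such that: (a) every reward r : List τ → ℝ consistent with D (meaning r w > r l for each pair (w, l) ∈ D) satisfies r y* > r y for y ∈ {y', y'', y'''}, so y* is the unique optimal response among the dataset responses; (b) P_D(y*.take i ≻ y'.take i) = 1/3; and (c) every V : List τ → ℝ satisfying σ(V (y*.take i) − V (y'.take i)) = P_D(y*.take i ≻ y'.take i) has V (y*.take i) < V (y'.take i). -/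
/-- The logistic (sigmoid) function `σ(z) = 1 / (1 + exp (−z))`. -/
noncomputable def logistic (z : ℝ) : ℝ := 1 / (1 + Real.exp (-z))

open Classical in
/-- Number of pairs `(w, l)` in the preference dataset `D` that are relevant to
`(p1, p2)`: `p1` is a prefix of one of `w, l` and `p2` is a prefix of the other. -/
noncomputable def relCount {τ : Type*} (D : List (List τ × List τ)) (p1 p2 : List τ) : ℕ :=
  (D.map (fun wl =>
    if (p1 <+: wl.1 ∧ p2 <+: wl.2) ∨ (p1 <+: wl.2 ∧ p2 <+: wl.1) then 1 else 0)).sum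

open Classical in
/-- Number of pairs `(w, l)` in the preference dataset `D` with `p1` a prefix of the
winning response `w` and `p2` a prefix of the losing response `l`. -/
noncomputable def winCount {τ : Type*} (D : List (List τ × List τ)) (p1 p2 : List τ) : ℕ :=
  (D.map (fun wl => if p1 <+: wl.1 ∧ p2 <+: wl.2 then 1 else 0)).sum

/-- Empirical preference probability `P_D(p1 ≻ p2)`. -/
noncomputable def empProb {τ : Type*} (D : List (List τ × List τ)) (p1 p2 : List τ) : ℝ :=
  (winCount D p1 p2 : ℝ) / (relCount D p1 p2 : ℝ)

/-!
Take `y* = 00`, `y' = 10`, `y'' = 01`, `y''' = 02` and `i = 1`. The dataset forces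
`r y' < r y*` and `r y'', r y''' < r y'`, so `y*` is optimal for every consistent reward.
But the prefix pair `(0, 1)` is relevant to all three comparisons while `0` beats `1` in
only one of them, so `P_D(0 ≻ 1) = 1/3 < 1/2 = σ 0`, and matching this probability with
`σ (V 0 - V 1)` forces `V 0 < V 1`.
-/

lemma logistic_lt_half_iff {z : ℝ} : logistic z < 1 / 2 ↔ z < 0 := by
  have hden : 0 < 1 + Real.exp (-z) := by positivity
  rw [logistic, div_lt_div_iff₀ hden two_pos, one_mul, one_mul, ← neg_pos,
    ← Real.one_lt_exp_iff]
  constructor <;> intro h <;> linarith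

section ChainDataset

variable {α : Type*}

lemma lt_of_consistent_chain {a b c d : α} (r : α → ℝ)
    (hr : ∀ wl ∈ [(a, b), (b, c), (b, d)], r wl.2 < r wl.1) :
    r b < r a ∧ r c < r a ∧ r d < r a := by
  have hab := hr (a, b) (by simp)
  have hbc := hr (b, c) (by simp)
  have hbd := hr (b, d) (by simp)
  exact ⟨hab, hbc.trans hab, hbd.trans hab⟩

lemma List.take_prefix_of_take_eq {a c : List α} {i : ℕ} (h : c.take i = a.take i) :
    a.take i <+: c :=
  h ▸ List.take_prefix i c

lemma List.not_take_prefix_of_take_ne {a b : List α} {i : ℕ} (hi : i ≤ a.length)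
    (h : a.take i ≠ b.take i) : ¬ a.take i <+: b := by
  rw [List.prefix_iff_eq_take, List.length_take_of_le hi]
  exact h

lemma empProb_take_chain {a b c d : List α} {i : ℕ} (hi : i ≤ a.length)
    (hab : a.take i ≠ b.take i) (hc : c.take i = a.take i) (hd : d.take i = a.take i) :
    empProb [(a, b), (b, c), (b, d)] (a.take i) (b.take i) = 1 / 3 := by
  have ha : a.take i <+: a := List.take_prefix i a
  have hb : b.take i <+: b := List.take_prefix i b
  have hac : a.take i <+: c := List.take_prefix_of_take_eq hc
  have had : a.take i <+: d := List.take_prefix_of_take_eq hd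
  have hnb : ¬ a.take i <+: b := List.not_take_prefix_of_take_ne hi hab
  have hwin : winCount [(a, b), (b, c), (b, d)] (a.take i) (b.take i) = 1 := by
    simp [winCount, ha, hb, hnb]
  have hrel : relCount [(a, b), (b, c), (b, d)] (a.take i) (b.take i) = 3 := by
    simp [relCount, ha, hb, hac, had]
  rw [empProb, hwin, hrel]
  norm_num

end ChainDataset

/-- Theorem 1 (PARGS may score a prefix of the optimal sequence below another prefix):
there are a nonempty finite vocabulary `τ`, a length `n`, an index `0 < i < n`, four
pairwise distinct full sequences `y*, y', y'', y'''` of length `n` with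
`y*.take (i−1) = y'.take (i−1)`, `y*.take i ≠ y'.take i`, and
`y*.take i = y''.take i = y'''.take i`, and a preference dataset
`D = [(y*, y'), (y', y''), (y', y''')]` such that (a) every reward `r` consistent with
`D` ranks `y*` strictly above `y'`, `y''` and `y'''` (so `y*` is the unique optimal
response among the dataset responses), (b) `P_D(y*.take i ≻ y'.take i) = 1/3`, and
(c) every `V` with `σ(V (y*.take i) − V (y'.take i)) = P_D(y*.take i ≻ y'.take i)`
satisfies `V (y*.take i) < V (y'.take i)`. -/
theorem pargs_counterexample :
    ∃ (τ : Type) (_ : Fintype τ) (_ : Nonempty τ) (n i : ℕ)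
      (ystar y' y'' y''' : List τ) (D : List (List τ × List τ)),
      0 < i ∧ i < n ∧
      ystar.length = n ∧ y'.length = n ∧ y''.length = n ∧ y'''.length = n ∧
      ystar ≠ y' ∧ ystar ≠ y'' ∧ ystar ≠ y''' ∧ y' ≠ y'' ∧ y' ≠ y''' ∧ y'' ≠ y''' ∧
      ystar.take (i - 1) = y'.take (i - 1) ∧ ystar.take i ≠ y'.take i ∧
      ystar.take i = y''.take i ∧ ystar.take i = y'''.take i ∧
      D = [(ystar, y'), (y', y''), (y', y''')] ∧
      (∀ r : List τ → ℝ, (∀ wl ∈ D, r wl.2 < r wl.1) →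
        r y' < r ystar ∧ r y'' < r ystar ∧ r y''' < r ystar) ∧
      empProb D (ystar.take i) (y'.take i) = 1 / 3 ∧
      (∀ V : List τ → ℝ,
        logistic (V (ystar.take i) - V (y'.take i)) = empProb D (ystar.take i) (y'.take i) →
        V (ystar.take i) < V (y'.take i)) := by
  have hne : ([0, 0] : List (Fin 3)).take 1 ≠ ([1, 0] : List (Fin 3)).take 1 := by decide
  have hprob := empProb_take_chain (c := [0, 1]) (d := [0, 2]) (by simp) hne rfl rfl
  refine ⟨Fin 3, inferInstance, ⟨0⟩, 2, 1, [0, 0], [1, 0], [0, 1], [0, 2], _,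
    one_pos, one_lt_two, rfl, rfl, rfl, rfl, by decide, by decide, by decide, by decide,
    by decide, by decide, rfl, hne, rfl, rfl, rfl, lt_of_consistent_chain,
    hprob, fun V hV => ?_⟩
  rw [← sub_neg, ← logistic_lt_half_iff, hV, hprob]
  norm_num
end

section
/- (Theorem 2: CD may score a prefix of the optimal sequence below another prefix.) There exist a nonempty finite type τ, n : ℕ, an index i with 0 < i < n, three pairwise distinct lists y*, y', y'' over τ of length n with y*.take (i−1) = y'.take (i−1), y*.take i ≠ y'.take i, and y*.take i = y''.take i, a reward r : List τ → ℝ with r y* = 6, r y' = 4, r y'' = −6 and r y* > r y for every list y of length n with y ≠ y* (so y* is the unique optimal response), and continuation weights π such that π assigns probability 1/2 to each of the two length-(n−i) continuations of y*.take i given by y* and y'', and probability 1 to the length-(n−i) continuation of y'.take i given by y', for which the CD target values satisfy V*(y*.take i) = 0 and V*(y'.take i) = 4, hence V*(y*.take i) < V*(y'.take i). -/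
/-!
Take `τ = Bool`, `n = 2`, `i = 1`, `y* = [true, true]`, `y' = [false, false]` and
`y'' = [true, false]`. After the first token `true` the base model is equally likely to
continue to the optimum (reward `6`) or to the disaster `y''` (reward `-6`), so CD values that
prefix at `0`; after `false` it deterministically continues to `y'` (reward `4`).
-/

/-- CD target value of a partial sequence `s`: the `π`-weighted average of the rewards
`r (s ++ e)` over all continuations `e` of length `n - s.length` (continuations are
enumerated as `List.ofFn e` for `e : Fin (n - s.length) → τ`), where `π` gives the
base-model continuation weight of each continuation. -/
noncomputable def cdValue {τ : Type*} [Fintype τ] (n : ℕ) (r : List τ → ℝ)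
    (π : List τ → ℝ) (s : List τ) : ℝ :=
  ∑ e : Fin (n - s.length) → τ, π (List.ofFn e) * r (s ++ List.ofFn e)

theorem cdValue_eq_sum_of_support {τ : Type*} [Fintype τ] (n : ℕ) (r π : List τ → ℝ)
    (s : List τ) (S : Finset (List τ)) (hS : ∀ e ∈ S, e.length = n - s.length)
    (hπ : ∀ e : List τ, e.length = n - s.length → e ∉ S → π e = 0) :
    cdValue n r π s = ∑ e ∈ S, π e * r (s ++ e) := by
  rw [cdValue]
  generalize n - s.length = m at hS hπ ⊢
  let ofFn : (Fin m → τ) ↪ List τ := ⟨List.ofFn, List.ofFn_injective⟩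
  have hS_sub : S ⊆ Finset.univ.map ofFn := by
    intro e he
    obtain rfl := hS e he
    simpa [ofFn] using ⟨e.get, List.ofFn_get e⟩
  have h_off_S : ∀ e ∈ Finset.univ.map ofFn, e ∉ S → π e * r (s ++ e) = 0 := by
    intro e he heS
    obtain ⟨f, -, rfl⟩ := Finset.mem_map.mp he
    rw [hπ (ofFn f) List.length_ofFn heS, zero_mul]
  exact (Finset.sum_map _ ofFn _).symm.trans (Finset.sum_subset hS_sub h_off_S).symm

theorem List.eq_singleton_true_or_false {e : List Bool} (he : e.length = 1) :
    e = [true] ∨ e = [false] := by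
  obtain ⟨a, rfl⟩ := List.length_eq_one_iff.mp he
  cases a <;> simp

namespace CDCounterexample

noncomputable def reward (y : List Bool) : ℝ :=
  if y = [true, true] then 6 else if y = [false, false] then 4 else if y = [true, false] then -6
  else 0

-- Only continuations of length `1` are ever weighed, so after `[true]` these weights sum to `1`.
noncomputable def weights (s e : List Bool) : ℝ :=
  if s = [true] then 1 / 2 else if s = [false] ∧ e = [false] then 1 else 0

theorem reward_lt_of_ne {y : List Bool} (hy : y ≠ [true, true]) :
    reward y < reward [true, true] := by
  simp only [reward, hy, if_true, if_false]
  split_ifs <;> norm_num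

theorem weights_nonneg (s e : List Bool) : 0 ≤ weights s e := by
  unfold weights
  split_ifs <;> norm_num

theorem weights_false_eq_zero {e : List Bool} (he : e ≠ [false]) : weights [false] e = 0 := by
  simp [weights, he]

theorem cdValue_true : cdValue 2 reward (weights [true]) [true] = 0 := by
  rw [cdValue_eq_sum_of_support 2 reward _ [true] {[true], [false]} (by simp)
    fun e he heS => absurd (List.eq_singleton_true_or_false he) (by simpa using heS)]
  norm_num [weights, reward]

theorem cdValue_false : cdValue 2 reward (weights [false]) [false] = 4 := by
  rw [cdValue_eq_sum_of_support 2 reward _ [false] {[false]} (by simp)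
    fun e _ heS => weights_false_eq_zero (by simpa using heS)]
  norm_num [weights, reward]

end CDCounterexample

open CDCounterexample in
/-- Theorem 2 (CD may score a prefix of the optimal sequence below another prefix):
there are a nonempty finite vocabulary `τ`, a length `n`, an index `0 < i < n`, three
pairwise distinct full sequences `y*, y', y''` of length `n` with
`y*.take (i−1) = y'.take (i−1)`, `y*.take i ≠ y'.take i`, `y*.take i = y''.take i`,
a reward `r` with `r y* = 6`, `r y' = 4`, `r y'' = −6`, and `r y* > r y` for every
other full sequence `y` (so `y*` is the unique optimal response), and nonnegative
continuation weights `π` (indexed by prefix) assigning probability `1/2` to each of the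
continuations of `y*.take i` given by `y*` and `y''` (and `0` to all other continuations
of length `n − i`), and probability `1` to the continuation of `y'.take i` given by `y'`
(and `0` to all others), such that the CD target values satisfy `V*(y*.take i) = 0` and
`V*(y'.take i) = 4`, hence `V*(y*.take i) < V*(y'.take i)`. -/
theorem cd_counterexample :
    ∃ (τ : Type) (instF : Fintype τ) (_ : Nonempty τ) (n i : ℕ)
      (ystar y' y'' : List τ) (r : List τ → ℝ) (π : List τ → List τ → ℝ),
      0 < i ∧ i < n ∧
      ystar.length = n ∧ y'.length = n ∧ y''.length = n ∧
      ystar ≠ y' ∧ ystar ≠ y'' ∧ y' ≠ y'' ∧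
      ystar.take (i - 1) = y'.take (i - 1) ∧ ystar.take i ≠ y'.take i ∧
      ystar.take i = y''.take i ∧
      r ystar = 6 ∧ r y' = 4 ∧ r y'' = -6 ∧
      (∀ y : List τ, y.length = n → y ≠ ystar → r y < r ystar) ∧
      (∀ s e : List τ, 0 ≤ π s e) ∧
      π (ystar.take i) (ystar.drop i) = 1 / 2 ∧
      π (ystar.take i) (y''.drop i) = 1 / 2 ∧
      (∀ e : List τ, e.length = n - i → e ≠ ystar.drop i → e ≠ y''.drop i →
        π (ystar.take i) e = 0) ∧
      π (y'.take i) (y'.drop i) = 1 ∧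
      (∀ e : List τ, e.length = n - i → e ≠ y'.drop i → π (y'.take i) e = 0) ∧
      @cdValue τ instF n r (π (ystar.take i)) (ystar.take i) = 0 ∧
      @cdValue τ instF n r (π (y'.take i)) (y'.take i) = 4 ∧
      @cdValue τ instF n r (π (ystar.take i)) (ystar.take i) <
        @cdValue τ instF n r (π (y'.take i)) (y'.take i) := by
  refine ⟨Bool, inferInstance, ⟨true⟩, 2, 1, [true, true], [false, false], [true, false],
    reward, weights, by norm_num, by norm_num, rfl, rfl, rfl, by simp, by simp, by simp, rfl,
    by simp, rfl, by norm_num [reward], by norm_num [reward], by norm_num [reward],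
    fun _ _ hy => reward_lt_of_ne hy, weights_nonneg, rfl, rfl,
    fun e he h₁ h₂ => (List.eq_singleton_true_or_false he).elim h₁ h₂ |>.elim,
    by simp [weights], fun e _ he => weights_false_eq_zero he, cdValue_true, cdValue_false,
    cdValue_true.trans_lt (four_pos.trans_eq cdValue_false.symm)⟩
end

section
/- (Generalized CD reversal.) Let τ be a nonempty finite type, n : ℕ, i ≤ n, and let y*, y', y'' be lists over τ of length n with y*.take i = y''.take i. Let r : List τ → ℝ satisfy r y* > r y' > r y'', and let p ∈ [0,1] with p < (r y' − r y'') / (r y* − r y''). If the continuation distribution for the prefix y*.take i assigns probability p to the continuation of y* and probability 1 − p to the continuation of y'', and the continuation distribution for the prefix y'.take i assigns probability 1 to the continuation of y', then the CD target values satisfy V*(y*.take i) = p · r y* + (1 − p) · r y'' < r y' = V*(y'.take i); that is, the prefix extendable to the higher-reward sequence y* receives a strictly lower CD value. -/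
lemma ofFn_get_cast {τ : Type*} {l : List τ} {m : ℕ} (h : l.length = m) :
    List.ofFn (fun j : Fin m => l.get (Fin.cast h.symm j)) = l := by
  apply List.ext_getElem
  · simp [h]
  · intro k h1 h2
    simp [List.getElem_ofFn]

lemma sum_one_list {τ : Type*} [Fintype τ] (m : ℕ) (g : List τ → ℝ) (l1 : List τ)
    (h1 : l1.length = m) (hz : ∀ e : List τ, e.length = m → e ≠ l1 → g e = 0) :
    ∑ e : Fin m → τ, g (List.ofFn e) = g l1 := by
  set f1 : Fin m → τ := fun j => l1.get (Fin.cast h1.symm j) with hf1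
  have hof1 : List.ofFn f1 = l1 := ofFn_get_cast h1
  rw [Finset.sum_eq_single f1]
  · rw [hof1]
  · intro f _ hne
    apply hz _ (by simp) (fun hc => hne ?_)
    apply List.ofFn_injective
    rw [hof1, hc]
  · intro h; exact absurd (Finset.mem_univ f1) h

lemma sum_two_list {τ : Type*} [Fintype τ] (m : ℕ) (g : List τ → ℝ) (l1 l2 : List τ)
    (h1 : l1.length = m) (h2 : l2.length = m) (hne : l1 ≠ l2)
    (hz : ∀ e : List τ, e.length = m → e ≠ l1 → e ≠ l2 → g e = 0) :
    ∑ e : Fin m → τ, g (List.ofFn e) = g l1 + g l2 := by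
  set f1 : Fin m → τ := fun j => l1.get (Fin.cast h1.symm j) with hf1
  set f2 : Fin m → τ := fun j => l2.get (Fin.cast h2.symm j) with hf2
  have hof1 : List.ofFn f1 = l1 := ofFn_get_cast h1
  have hof2 : List.ofFn f2 = l2 := ofFn_get_cast h2
  have hf12 : f1 ≠ f2 := fun hc => hne (by rw [← hof1, ← hof2, hc])
  classical
  rw [← Finset.add_sum_erase _ _ (Finset.mem_univ f1), hof1]
  congr 1
  rw [Finset.sum_eq_single_of_mem f2 (Finset.mem_erase.2 ⟨hf12.symm, Finset.mem_univ f2⟩), hof2]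
  intro f hf hne2
  have hne1 : f ≠ f1 := (Finset.mem_erase.1 hf).1
  exact hz _ (by simp)
    (fun hc => hne1 (List.ofFn_injective (by rw [hof1, hc])))
    (fun hc => hne2 (List.ofFn_injective (by rw [hof2, hc])))

/-- Generalized CD reversal: let `y*, y', y''` be full sequences of length `n` with
`y*.take i = y''.take i`, let `r y* > r y' > r y''`, and let `p ∈ [0,1]` with
`p < (r y' − r y'') / (r y* − r y'')`.  If the continuation distribution `π1` for the
prefix `y*.take i` assigns probability `p` to the continuation of `y*` and `1 − p` to
the continuation of `y''` (and `0` to every other continuation of length `n − i`), and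
the continuation distribution `π2` for the prefix `y'.take i` assigns probability `1`
to the continuation of `y'` (and `0` to every other), then the CD target values satisfy
`V*(y*.take i) = p · r y* + (1 − p) · r y'' < r y' = V*(y'.take i)`: the prefix
extendable to the higher-reward sequence `y*` receives a strictly lower CD value. -/
theorem cd_reversal_general {τ : Type*} [Fintype τ] [Nonempty τ]
    (n i : ℕ) (hi : i ≤ n)
    (ystar y' y'' : List τ)
    (hlen1 : ystar.length = n) (hlen2 : y'.length = n) (hlen3 : y''.length = n)
    (hpre : ystar.take i = y''.take i)
    (r : List τ → ℝ) (hr1 : r y' < r ystar) (hr2 : r y'' < r y')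
    (p : ℝ) (hp0 : 0 ≤ p) (hp1 : p ≤ 1)
    (hplt : p < (r y' - r y'') / (r ystar - r y''))
    (π1 π2 : List τ → ℝ)
    (hπ1a : π1 (ystar.drop i) = p) (hπ1b : π1 (y''.drop i) = 1 - p)
    (hπ1c : ∀ e : List τ, e.length = n - i → e ≠ ystar.drop i → e ≠ y''.drop i → π1 e = 0)
    (hπ2a : π2 (y'.drop i) = 1)
    (hπ2b : ∀ e : List τ, e.length = n - i → e ≠ y'.drop i → π2 e = 0) :
    cdValue n r π1 (ystar.take i) = p * r ystar + (1 - p) * r y'' ∧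
    cdValue n r π2 (y'.take i) = r y' ∧
    cdValue n r π1 (ystar.take i) < cdValue n r π2 (y'.take i) := by
  have ht1 : (ystar.take i).length = i := by
    rw [List.length_take, hlen1, min_eq_left hi]
  have ht2 : (y'.take i).length = i := by
    rw [List.length_take, hlen2, min_eq_left hi]
  have hd1 : (ystar.drop i).length = n - i := by rw [List.length_drop, hlen1]
  have hd2 : (y''.drop i).length = n - i := by rw [List.length_drop, hlen3]
  have hd3 : (y'.drop i).length = n - i := by rw [List.length_drop, hlen2]
  have happ1 : ystar.take i ++ ystar.drop i = ystar := List.take_append_drop i ystar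
  have happ2 : ystar.take i ++ y''.drop i = y'' := by
    rw [hpre]; exact List.take_append_drop i y''
  have happ3 : y'.take i ++ y'.drop i = y' := List.take_append_drop i y'
  have hne : ystar.drop i ≠ y''.drop i := by
    intro hc
    have : ystar = y'' := by rw [← happ1, hc, happ2]
    rw [this] at hr1; linarith
  have hv1 : cdValue n r π1 (ystar.take i) = p * r ystar + (1 - p) * r y'' := by
    unfold cdValue
    rw [ht1]
    rw [sum_two_list (n - i) (fun e => π1 e * r (ystar.take i ++ e)) _ _ hd1 hd2 hne
      (fun e he h1 h2 => by simp [hπ1c e he h1 h2])]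
    simp only [happ1, happ2, hπ1a, hπ1b]
  have hv2 : cdValue n r π2 (y'.take i) = r y' := by
    unfold cdValue
    rw [ht2]
    rw [sum_one_list (n - i) (fun e => π2 e * r (y'.take i ++ e)) _ hd3
      (fun e he h1 => by simp [hπ2b e he h1])]
    simp [happ3, hπ2a]
  refine ⟨hv1, hv2, ?_⟩
  rw [hv1, hv2]
  have hc : 0 < r ystar - r y'' := by linarith
  nlinarith [(lt_div_iff₀ hc).mp hplt]
end
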